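/- arXiv:2306.05361 — 5 statements merged into one kernel-verified Lean document; each statement's English description precedes it below -/
import Mathlib

section
/- Let p be a prime number and let S be a perfect commutative ring of characteristic p (i.e., the Frobenius endomorphism x ↦ x^p of S is bijective). For every element x ∈ S, the quotient ring W(S)/([x]) is p-torsion free; equivalently, for all Witt vectors y, z ∈ W(S) satisfying p·y = [x]·z, the element y lies in the principal ideal ([x]) of W(S). -/
/-- Let `p` be a prime and `S` a perfect commutative ring of characteristic `p`.
For every `x ∈ S`, the quotient `W(S)/([x])` is `p`-torsion free: whenever
`p • y = [x] * z` in the ring of `p`-typical Witt vectors `W(S)`, the element `y`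
lies in the principal ideal generated by the Teichmüller representative `[x]`. -/
theorem witt_quotient_teichmuller_p_torsion_free
    (p : ℕ) [Fact p.Prime] (S : Type*) [CommRing S] [CharP S p] [PerfectRing S p]
    (x : S) (y z : WittVector p S)
    (h : (p : WittVector p S) * y = WittVector.teichmuller p x * z) :
    y ∈ Ideal.span {(WittVector.teichmuller p x : WittVector p S)} := by
  classical
  -- p-th root of x
  set a : S := (frobeniusEquiv S p).symm x with ha
  have hap : a ^ p = x := frobeniusEquiv_symm_pow_p S p x
  -- Frobenius of Teichmüller
  have hFt : WittVector.frobenius (WittVector.teichmuller p a)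
      = WittVector.teichmuller p x := by
    ext n
    rw [WittVector.coeff_frobenius_charP]
    cases n with
    | zero => simpa using hap
    | succ n =>
        rw [WittVector.teichmuller_coeff_pos _ _ _ n.succ_pos,
          WittVector.teichmuller_coeff_pos _ _ _ n.succ_pos,
          zero_pow (Fact.out : p.Prime).ne_zero]
  -- choose z₂ with F z₂ = z
  obtain ⟨z₂, rfl⟩ := (WittVector.frobenius_bijective p S).surjective z
  -- F (V y) = F ([a] * z₂), hence V y = [a] * z₂
  have hVy : WittVector.verschiebung y = WittVector.teichmuller p a * z₂ := by
    apply (WittVector.frobenius_bijective p S).injective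
    have h1 : WittVector.frobenius (WittVector.verschiebung y)
        = (p : WittVector p S) * y := by
      rw [← WittVector.verschiebung_frobenius_comm.eq,
        WittVector.verschiebung_frobenius, mul_comm]
    rw [h1, h, map_mul, hFt]
  -- decompose z₂ = [c] + V t
  set c : S := z₂.coeff 0 with hc
  have key : ∀ u : WittVector p S, u.coeff 0 = 0 →
      u = WittVector.verschiebung (WittVector.mk p (fun n => u.coeff (n + 1))) := by
    intro u hu
    ext n
    cases n with
    | zero => rw [WittVector.verschiebung_coeff_zero, hu]
    | succ n => rw [WittVector.verschiebung_coeff_succ, WittVector.coeff_mk]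
  set t : WittVector p S :=
    WittVector.mk p (fun n => (z₂ - WittVector.teichmuller p c).coeff (n + 1)) with ht
  have hsub : z₂ - WittVector.teichmuller p c = WittVector.verschiebung t := by
    apply key
    have : (WittVector.constantCoeff : WittVector p S →+* S)
        (z₂ - WittVector.teichmuller p c) = c - c := by
      rw [map_sub]
      simp [WittVector.constantCoeff_apply, hc]
    simpa using this
  have hz₂ : z₂ = WittVector.teichmuller p c + WittVector.verschiebung t := by
    rw [← hsub]; ring
  -- compute [a] * z₂ = [a*c] + V (t * [x])
  have h2 : WittVector.teichmuller p a * z₂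
      = WittVector.teichmuller p (a * c)
        + WittVector.verschiebung (t * WittVector.teichmuller p x) := by
    rw [hz₂, mul_add, ← map_mul, ← hFt, WittVector.verschiebung_mul_frobenius]; ring
  -- constant coefficient gives a * c = 0
  have hac : a * c = 0 := by
    have := congrArg (WittVector.constantCoeff : WittVector p S →+* S) (hVy.trans h2)
    rw [map_add] at this
    simpa [WittVector.constantCoeff_apply, WittVector.mul_coeff_zero,
      WittVector.verschiebung_coeff_zero] using this.symm
  have h3 : WittVector.verschiebung y
      = WittVector.verschiebung (t * WittVector.teichmuller p x) := by
    rw [hVy, h2, hac, WittVector.teichmuller_zero, zero_add]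
  -- V is injective
  have hy : y = t * WittVector.teichmuller p x := by
    ext n
    have := congrArg (fun w : WittVector p S => w.coeff (n + 1)) h3
    simpa [WittVector.verschiebung_coeff_succ] using this
  rw [Ideal.mem_span_singleton]
  exact ⟨t, by rw [hy, mul_comm]⟩
end

section
/- Let A be a commutative ring and let ξ ∈ A be a nonzerodivisor such that A is ξ-adically separated, i.e., ⋂_{n ≥ 0} (ξ^n) = 0. Let b ∈ A be an element whose image in A/(ξ) is a nonzerodivisor. Then: (i) for every integer m ≥ 1, the image of ξ in A/(b^m) is a nonzerodivisor; and (ii) b is a nonzerodivisor in A. -/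
/-!
If `c` is a nonzerodivisor modulo a nonzerodivisor `a`, then `x * a ∈ (c)` forces `x ∈ (c)`:
write `x * a = c * y`, read off `y ∈ (a)` modulo `a`, and cancel `a`. Likewise, if `x * c = 0`
then `x = a * z` with again `z * c = 0`, so `x` lies in every `(a ^ n)`, hence vanishes when `A`
is `a`-adically separated.
-/

open Ideal
open scoped nonZeroDivisors

section

variable {A : Type*} [CommRing A] {a c : A}

lemma mem_span_singleton_of_mul_mem
    (hc : Ideal.Quotient.mk (span {a}) c ∈ (A ⧸ span {a})⁰) {x : A} (hx : x * c ∈ span {a}) :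
    x ∈ span {a} := by
  rw [← Ideal.Quotient.eq_zero_iff_mem] at hx ⊢
  exact mem_nonZeroDivisors_iff_right.mp hc _ (by rwa [← map_mul])

lemma mk_mem_nonZeroDivisors_quotient_span_symm (ha : a ∈ A⁰)
    (hc : Ideal.Quotient.mk (span {a}) c ∈ (A ⧸ span {a})⁰) :
    Ideal.Quotient.mk (span {c}) a ∈ (A ⧸ span {c})⁰ := by
  rw [mem_nonZeroDivisors_iff_right]
  intro z hz
  obtain ⟨x, rfl⟩ := Ideal.Quotient.mk_surjective z
  rw [← map_mul, Ideal.Quotient.eq_zero_iff_mem, mem_span_singleton'] at hz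
  obtain ⟨y, hy⟩ := hz
  obtain ⟨w, rfl⟩ := mem_span_singleton'.mp <|
    mem_span_singleton_of_mul_mem hc (mem_span_singleton'.mpr ⟨x, hy.symm⟩)
  have hx : x = c * w :=
    sub_eq_zero.mp (mem_nonZeroDivisors_iff_right.mp ha _ (by linear_combination -hy))
  rw [hx, Ideal.Quotient.eq_zero_iff_mem]
  exact mem_span_singleton.mpr ⟨w, rfl⟩

lemma exists_eq_mul_of_mul_eq_zero (ha : a ∈ A⁰)
    (hc : Ideal.Quotient.mk (span {a}) c ∈ (A ⧸ span {a})⁰) {x : A} (hx : x * c = 0) :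
    ∃ z, x = a * z ∧ z * c = 0 := by
  obtain ⟨z, rfl⟩ := mem_span_singleton'.mp <|
    mem_span_singleton_of_mul_mem hc (hx ▸ Submodule.zero_mem _)
  exact ⟨z, mul_comm z a, mem_nonZeroDivisors_iff_right.mp ha _ (by linear_combination hx)⟩

lemma mem_span_pow_of_mul_eq_zero (ha : a ∈ A⁰)
    (hc : Ideal.Quotient.mk (span {a}) c ∈ (A ⧸ span {a})⁰) (n : ℕ) {x : A} (hx : x * c = 0) :
    x ∈ span {a ^ n} := by
  induction n generalizing x with
  | zero => simp
  | succ n ih =>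
    obtain ⟨z, rfl, hz⟩ := exists_eq_mul_of_mul_eq_zero ha hc hx
    obtain ⟨w, rfl⟩ := mem_span_singleton'.mp (ih hz)
    exact mem_span_singleton'.mpr ⟨w, by ring⟩

lemma mem_nonZeroDivisors_of_iInf_span_pow_eq_bot (ha : a ∈ A⁰)
    (hsep : (⨅ n : ℕ, span {a ^ n}) = (⊥ : Ideal A))
    (hc : Ideal.Quotient.mk (span {a}) c ∈ (A ⧸ span {a})⁰) :
    c ∈ A⁰ := by
  rw [mem_nonZeroDivisors_iff_right]
  intro x hx
  have hmem : x ∈ ⨅ n : ℕ, span {a ^ n} :=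
    mem_iInf.mpr fun n ↦ mem_span_pow_of_mul_eq_zero ha hc n hx
  rwa [hsep, mem_bot] at hmem

end

/-- Let `A` be a commutative ring and `ξ ∈ A` a nonzerodivisor such that `A` is
`ξ`-adically separated (`⋂ₙ (ξ^n) = 0`).  Let `b ∈ A` be an element whose image in
`A/(ξ)` is a nonzerodivisor.  Then (i) for every `m ≥ 1` the image of `ξ` in
`A/(b^m)` is a nonzerodivisor, and (ii) `b` is a nonzerodivisor in `A`. -/
theorem nonzerodivisor_mod_pow_of_separated
    (A : Type*) [CommRing A] (ξ b : A)
    (hξ : ξ ∈ nonZeroDivisors A)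
    (hsep : (⨅ n : ℕ, Ideal.span {ξ ^ n}) = (⊥ : Ideal A))
    (hb : Ideal.Quotient.mk (Ideal.span {ξ}) b ∈ nonZeroDivisors (A ⧸ Ideal.span {ξ})) :
    (∀ m : ℕ, 1 ≤ m →
      Ideal.Quotient.mk (Ideal.span {b ^ m}) ξ ∈ nonZeroDivisors (A ⧸ Ideal.span {b ^ m})) ∧
    b ∈ nonZeroDivisors A :=
  ⟨fun m _ ↦ mk_mem_nonZeroDivisors_quotient_span_symm hξ (by simpa using pow_mem hb m),
    mem_nonZeroDivisors_of_iInf_span_pow_eq_bot hξ hsep hb⟩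
end

section
/- Let k be an infinite field, let n ≥ 2 be an integer, and let f ∈ k[x_1, …, x_n] be a nonzero homogeneous polynomial of degree m ≥ 1. Then there exist two distinct indices i, j ∈ {1, …, n} and an element b ∈ k such that the image of f under the quotient map k[x_1, …, x_n] → k[x_1, …, x_n]/(x_i − b·x_j) is nonzero. -/
open MvPolynomial in
/-- Let `k` be an infinite field, `n ≥ 2`, and `f ∈ k[x_1, …, x_n]` a nonzero
homogeneous polynomial of degree `m ≥ 1`.  Then there are two distinct indices
`i ≠ j` and a scalar `b ∈ k` such that the image of `f` in
`k[x_1, …, x_n]/(x_i - b·x_j)` is nonzero. -/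
theorem exists_nonzero_image_mod_linear_relation
    (k : Type*) [Field k] [Infinite k] (n : ℕ) (hn : 2 ≤ n)
    (m : ℕ) (hm : 1 ≤ m)
    (f : MvPolynomial (Fin n) k) (hf : f ≠ 0) (hhom : f.IsHomogeneous m) :
    ∃ (i j : Fin n) (b : k), i ≠ j ∧
      Ideal.Quotient.mk (Ideal.span {(X i - C b * X j : MvPolynomial (Fin n) k)}) f ≠ 0 := by
  by_contra h
  push_neg at h
  apply hf
  apply MvPolynomial.funext
  intro a
  rw [map_zero]
  have key : ∀ (i j : Fin n) (b : k), i ≠ j → a i = b * a j →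
      MvPolynomial.eval a f = 0 := by
    intro i j b hij hab
    have hmem : f ∈ Ideal.span {(X i - C b * X j : MvPolynomial (Fin n) k)} := by
      have := h i j b hij
      rwa [Ideal.Quotient.eq_zero_iff_mem] at this
    rw [Ideal.mem_span_singleton] at hmem
    obtain ⟨g, rfl⟩ := hmem
    simp [hab]
  have h01 : (⟨0, by omega⟩ : Fin n) ≠ ⟨1, by omega⟩ := by simp [Fin.ext_iff]
  by_cases ha : a ⟨1, by omega⟩ = 0
  · exact key _ _ 0 h01.symm (by simp [ha])
  · exact key _ _ (a ⟨0, by omega⟩ / a ⟨1, by omega⟩) h01 (by field_simp)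
end

section
/- Let B be a commutative ring, ψ : B → B a ring endomorphism, and K ⊆ B an ideal such that ψ(K) ⊆ K and such that, for some integer m ≥ 1, ψ^m(x) = 0 for all x ∈ K. Let N be a B-module and let F : N → N be an additive map which is ψ-semilinear, i.e., F(b·n) = ψ(b)·F(n) for all b ∈ B and n ∈ N. Then F(K·N) ⊆ K·N, so F induces a semilinear endomorphism F̄ of N/KN over the induced endomorphism of B/K, and the quotient map N → N/KN restricts to a bijection from {n ∈ N : F(n) = n} onto {n̄ ∈ N/KN : F̄(n̄) = n̄}. -/
/-- Let `B` be a commutative ring, `ψ : B → B` a ring endomorphism, and `K ⊆ B` an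
ideal with `ψ(K) ⊆ K` and `ψ^[m](K) = 0` for some `m ≥ 1`.  Let `N` be a `B`-module
and `F : N → N` an additive `ψ`-semilinear map.  Then `F(K·N) ⊆ K·N`, so `F`
descends to a semilinear endomorphism of `N/KN`, and the quotient map restricts to a
bijection from the fixed points of `F` onto the fixed points of the induced map. -/
theorem fixed_points_bijective_of_semilinear_nilpotent_kernel
    (B : Type*) [CommRing B] (ψ : B →+* B) (K : Ideal B)
    (hK : ∀ b ∈ K, ψ b ∈ K) (m : ℕ) (hm : 1 ≤ m)
    (hnil : ∀ b ∈ K, (⇑ψ)^[m] b = 0)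
    (N : Type*) [AddCommGroup N] [Module B N] (F : N →ₛₗ[ψ] N) :
    ∃ hF : K • (⊤ : Submodule B N) ≤ (K • (⊤ : Submodule B N)).comap F,
      Set.BijOn (Submodule.Quotient.mk (p := K • (⊤ : Submodule B N)))
        {n : N | F n = n}
        {n : N ⧸ K • (⊤ : Submodule B N) |
          Submodule.mapQ (K • (⊤ : Submodule B N)) (K • (⊤ : Submodule B N)) F hF n = n} := by
  set P := K • (⊤ : Submodule B N) with hP
  -- iterate semilinearity
  have hiter : ∀ (j : ℕ) (b : B) (n : N), (⇑F)^[j] (b • n) = ((⇑ψ)^[j] b) • (⇑F)^[j] n := by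
    intro j
    induction j with
    | zero => intro b n; simp
    | succ j ih =>
      intro b n
      simp only [Function.iterate_succ_apply, map_smulₛₗ]
      exact ih (ψ b) (F n)
  have hiteradd : ∀ (j : ℕ) (x y : N), (⇑F)^[j] (x + y) = (⇑F)^[j] x + (⇑F)^[j] y := by
    intro j
    induction j with
    | zero => intro x y; simp
    | succ j ih => intro x y; simp [Function.iterate_succ_apply, ih]
  -- F preserves P
  have hF : P ≤ P.comap F := by
    intro x hx
    refine Submodule.smul_induction_on hx ?_ ?_
    · intro k hk n _
      simp only [Submodule.mem_comap, map_smulₛₗ]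
      exact Submodule.smul_mem_smul (hK k hk) Submodule.mem_top
    · intro x y hx hy
      simp only [Submodule.mem_comap, map_add] at *
      exact add_mem hx hy
  -- F^[m] kills P
  have hzero : ∀ x ∈ P, (⇑F)^[m] x = 0 := by
    intro x hx
    refine Submodule.smul_induction_on hx ?_ ?_
    · intro k hk n _
      rw [hiter, hnil k hk, zero_smul]
    · intro x y hx hy
      rw [hiteradd, hx, hy, add_zero]
  refine ⟨hF, ?_, ?_, ?_⟩
  · -- MapsTo
    intro n hn
    simp only [Set.mem_setOf_eq] at *
    rw [Submodule.mapQ_apply, hn]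
  · -- InjOn
    intro n hn n' hn' h
    have hd : n - n' ∈ P := (Submodule.Quotient.eq P).mp h
    have hfix : F (n - n') = n - n' := by
      rw [map_sub, hn, hn']
    have := hzero _ hd
    rw [Function.iterate_fixed hfix] at this
    exact sub_eq_zero.mp this
  · -- SurjOn
    intro q hq
    obtain ⟨n, rfl⟩ := Submodule.Quotient.mk_surjective P q
    simp only [Set.mem_setOf_eq, Submodule.mapQ_apply] at hq
    have hd : F n - n ∈ P := (Submodule.Quotient.eq P).mp hq
    set d := F n - n with hddef
    -- each iterate of d stays in P
    have hmem : ∀ j, (⇑F)^[j] d ∈ P := by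
      intro j
      induction j with
      | zero => exact hd
      | succ j ih =>
        rw [Function.iterate_succ_apply']
        exact hF ih
    set S := ∑ j ∈ Finset.range m, (⇑F)^[j] d with hS
    refine ⟨n + S, ?_, ?_⟩
    · -- fixed point
      show F (n + S) = n + S
      have hFS : F S = S - d := by
        rw [hS, map_sum]
        have h1 : ∀ j ∈ Finset.range m, F ((⇑F)^[j] d) = (⇑F)^[j+1] d := by
          intro j _; rw [Function.iterate_succ_apply']
        rw [Finset.sum_congr rfl h1]
        have h2 : ∑ j ∈ Finset.range (m+1), (⇑F)^[j] d
            = (∑ j ∈ Finset.range m, (⇑F)^[j+1] d) + (⇑F)^[0] d := Finset.sum_range_succ' _ m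
        have h3 : ∑ j ∈ Finset.range (m+1), (⇑F)^[j] d
            = S + (⇑F)^[m] d := by rw [Finset.sum_range_succ, hS]
        rw [hzero _ hd, add_zero] at h3
        simp only [Function.iterate_zero_apply] at h2
        rw [h3] at h2
        exact eq_sub_of_add_eq h2.symm
      rw [map_add, hFS]
      have : F n = n + d := by rw [hddef]; abel
      rw [this]; abel
    · -- same image
      have hSP : S ∈ P := Submodule.sum_mem _ (fun j _ => hmem j)
      rw [Submodule.Quotient.eq]
      simpa using hSP
end

section
/- Let p be a prime number and let S be a perfect commutative ring of characteristic p (i.e., the Frobenius endomorphism x ↦ x^p of S is bijective). Let ϖ ∈ S, and for each integer m ≥ 0 let ϖ^{1/p^m} ∈ S denote the unique element whose p^m-th power equals ϖ. Let I := ⋃_{m ≥ 0} (ϖ^{1/p^m}) be the union of the increasing chain of principal ideals (ϖ^{1/p^m}) ⊆ S. Suppose x ∈ W(S) is a Witt vector whose image under the induced ring homomorphism W(S) → W(S/I) is divisible by p. Then there exist an integer m ≥ 0 and Witt vectors y, z ∈ W(S) such that x = p·y + [ϖ^{1/p^m}]·z. -/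
open WittVector

private lemma pow_pow_injective (p : ℕ) [Fact p.Prime] (S : Type*) [CommRing S] [CharP S p]
    [PerfectRing S p] (m : ℕ) : Function.Injective (fun a : S => a ^ p ^ m) := by
  have : (fun a : S => a ^ p ^ m) = ⇑(iterateFrobeniusEquiv S p m) := by
    funext a; rw [iterateFrobeniusEquiv_def]
  rw [this]
  exact (iterateFrobeniusEquiv S p m).injective

private lemma witt_eq_p_mul_of_coeff_zero (p : ℕ) [hp : Fact p.Prime] (S : Type*) [CommRing S]
    [CharP S p] [PerfectRing S p] (v : WittVector p S) (hv : v.coeff 0 = 0) :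
    ∃ y : WittVector p S, v = (p : WittVector p S) * y := by
  refine ⟨(WittVector.frobeniusEquiv p S).symm (v.shift 1), ?_⟩
  have h1 : v = verschiebung^[1] (v.shift 1) := by
    apply eq_iterate_verschiebung
    intro i hi
    interval_cases i
    exact hv
  have h2 : WittVector.frobenius ((WittVector.frobeniusEquiv p S).symm (v.shift 1)) =
      v.shift 1 := (WittVector.frobeniusEquiv p S).apply_symm_apply _
  calc v = verschiebung (v.shift 1) := h1
    _ = verschiebung (WittVector.frobenius ((WittVector.frobeniusEquiv p S).symm (v.shift 1))) :=
        by rw [h2]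
    _ = ((WittVector.frobeniusEquiv p S).symm (v.shift 1)) * p := verschiebung_frobenius _
    _ = (p : WittVector p S) * _ := mul_comm _ _

/-- Let `p` be a prime, `S` a perfect commutative ring of characteristic `p`, and
`ϖ ∈ S`.  For each `m` let `r m` be the (unique) `p^m`-th root of `ϖ`, and let
`I = ⋃ₘ (r m)` be the union of the increasing chain of principal ideals `(r m)`.
If `x ∈ W(S)` becomes divisible by `p` in `W(S/I)`, then `x = p·y + [r m]·z` for
some `m` and some Witt vectors `y, z ∈ W(S)`. -/
theorem witt_eq_p_mul_add_teichmuller_mul_of_map_dvd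
    (p : ℕ) [Fact p.Prime] (S : Type*) [CommRing S] [CharP S p] [PerfectRing S p]
    (ϖ : S) (r : ℕ → S) (hr : ∀ m : ℕ, r m ^ p ^ m = ϖ)
    (x : WittVector p S)
    (hx : ∃ w : WittVector p (S ⧸ ⨆ m : ℕ, Ideal.span {r m}),
      WittVector.map (Ideal.Quotient.mk (⨆ m : ℕ, Ideal.span {r m})) x =
        (p : WittVector p (S ⧸ ⨆ m : ℕ, Ideal.span {r m})) * w) :
    ∃ (m : ℕ) (y z : WittVector p S),
      x = (p : WittVector p S) * y + WittVector.teichmuller p (r m) * z := by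
  set I : Ideal S := ⨆ m : ℕ, Ideal.span {r m} with hI
  obtain ⟨w, hw⟩ := hx
  obtain ⟨w', hw'⟩ := WittVector.map_surjective (Ideal.Quotient.mk I)
    Ideal.Quotient.mk_surjective w
  set u : WittVector p S := x - (p : WittVector p S) * w' with hu
  have hmapu : WittVector.map (Ideal.Quotient.mk I) u = 0 := by
    rw [hu, map_sub, map_mul, map_natCast, hw', hw, sub_self]
  have hu0 : u.coeff 0 ∈ I := by
    rw [← Ideal.Quotient.eq_zero_iff_mem]
    have := congrArg (fun v => WittVector.coeff v 0) hmapu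
    simpa [WittVector.map_coeff] using this
  -- the family of ideals is directed
  have hmono : Monotone (fun m : ℕ => Ideal.span ({r m} : Set S)) := by
    intro a b hab
    rw [Ideal.span_singleton_le_span_singleton]
    have hroot : r a = r b ^ p ^ (b - a) := by
      apply pow_pow_injective p S a
      show r a ^ p ^ a = (r b ^ p ^ (b - a)) ^ p ^ a
      rw [hr, ← pow_mul, ← pow_add, Nat.sub_add_cancel hab, hr]
    rw [hroot]
    exact dvd_pow_self _ (pow_ne_zero _ (Fact.out (p := p.Prime)).ne_zero)
  obtain ⟨m, hm⟩ := (Submodule.mem_iSup_of_directed _ hmono.directed_le).mp (hI ▸ hu0)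
  obtain ⟨s, hs⟩ := Ideal.mem_span_singleton'.mp hm
  set v : WittVector p S :=
    u - WittVector.teichmuller p (r m) * WittVector.teichmuller p s with hv
  have hv0 : v.coeff 0 = 0 := by
    have : WittVector.constantCoeff v = 0 := by
      rw [hv, map_sub, map_mul]
      simp only [WittVector.constantCoeff_apply, WittVector.teichmuller_coeff_zero]
      rw [show u.coeff 0 = WittVector.constantCoeff u from rfl] at hs ⊢
      rw [← hs, mul_comm, sub_self]
    simpa [WittVector.constantCoeff_apply] using this
  obtain ⟨y, hy⟩ := witt_eq_p_mul_of_coeff_zero p S v hv0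
  refine ⟨m, w' + y, WittVector.teichmuller p s, ?_⟩
  have : x = (p : WittVector p S) * w' + v +
      WittVector.teichmuller p (r m) * WittVector.teichmuller p s := by
    rw [hv, hu]; ring
  rw [this, hy]; ring
end
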